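/- (Extended Farkas lemma.) Let p ∈ l_∞(T) with F(p) ≠ ∅, and let (v, α) ∈ X* × ℝ. Then the following are equivalent: (i) ⟨v, x⟩ ≤ α for every x ∈ F(p); (ii) (v, α) ∈ cl*( cone( ⋃_{t∈T} epi (f_t − p_t)* ) ). -/

import Mathlib

open Filter
open scoped ENNReal

noncomputable section

/-- The Banach space `l_∞(T)` of bounded real functions on `T` with sup norm. -/
abbrev Linf (T : Type*) : Type _ := lp (fun _ : T => ℝ) ∞

/-- The Dirac evaluation functional `δ_t ∈ l_∞(T)*`. -/
def dirac (T : Type*) (t : T) : Linf T →L[ℝ] ℝ :=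
  LinearMap.mkContinuous
    { toFun := fun p => p t
      map_add' := fun p q => by simp [lp.coeFn_add]
      map_smul' := fun c p => by simp [lp.coeFn_smul] }
    1 (fun p => by rw [one_mul]; exact lp.norm_apply_le_norm ENNReal.top_ne_zero p t)

variable {X : Type*} [NormedAddCommGroup X] [NormedSpace ℝ X]

/-- Fenchel conjugate of an extended-real-valued function. -/
def conj (g : X → EReal) (u : X →L[ℝ] ℝ) : EReal :=
  ⨆ x : X, (u x : EReal) - g x

/-- `dom g* = {u* : g*(u*) < +∞}`. -/
def domConj (g : X → EReal) : Set (X →L[ℝ] ℝ) := {u | conj g u < ⊤}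

/-- `gph g* = {(u*, g*(u*)) : u* ∈ dom g*}`. -/
def gphConj (g : X → EReal) : Set ((X →L[ℝ] ℝ) × ℝ) :=
  {q | conj g q.1 = (q.2 : EReal)}

/-- `epi g* = {(u*, γ) : g*(u*) ≤ γ}`. -/
def epiConj (g : X → EReal) : Set ((X →L[ℝ] ℝ) × ℝ) :=
  {q | conj g q.1 ≤ (q.2 : EReal)}

/-- A proper extended-real-valued function: never `⊥`, not identically `⊤`. -/
def ErealProper (g : X → EReal) : Prop := (∀ x, g x ≠ ⊥) ∧ ∃ x, g x ≠ ⊤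

/-- Convexity of an extended-real-valued function. -/
def ErealConvexOn (g : X → EReal) : Prop :=
  ∀ x y : X, ∀ a b : ℝ, 0 ≤ a → 0 ≤ b → a + b = 1 →
    g (a • x + b • y) ≤ (a : EReal) * g x + (b : EReal) * g y

variable {T : Type*}

/-- The feasible solution map `F(p) = {x : f_t(x) ≤ p_t ∀ t}`. -/
def feas (f : T → X → EReal) (p : Linf T) : Set X :=
  {x | ∀ t, f t x ≤ ((p t : ℝ) : EReal)}

/-- The graph of the feasible solution map. -/
def feasGraph (f : T → X → EReal) : Set (Linf T × X) :=
  {q | q.2 ∈ feas f q.1}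

/-- Lipschitz-like (Aubin) property of a set-valued map (given by its graph `G`)
around `(z̄, ȳ) ∈ G` with modulus `ℓ`. -/
def LipLike {Z Y : Type*} [NormedAddCommGroup Z] [NormedAddCommGroup Y]
    (G : Set (Z × Y)) (zb : Z) (yb : Y) (ℓ : ℝ) : Prop :=
  ∃ U ∈ nhds zb, ∃ V ∈ nhds yb, ∀ z ∈ U, ∀ u ∈ U, ∀ y ∈ V,
    (z, y) ∈ G → ∃ y', (u, y') ∈ G ∧ ‖y - y'‖ ≤ ℓ * ‖z - u‖

/-- The exact Lipschitzian bound `lip G(z̄, ȳ)` (value `∞` if the map is not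
Lipschitz-like around `(z̄, ȳ)`). -/
def lipBound {Z Y : Type*} [NormedAddCommGroup Z] [NormedAddCommGroup Y]
    (G : Set (Z × Y)) (zb : Z) (yb : Y) : ℝ≥0∞ :=
  sInf {c : ℝ≥0∞ | ∃ ℓ : ℝ, 0 ≤ ℓ ∧ LipLike G zb yb ℓ ∧ c = ENNReal.ofReal ℓ}

/-- Coderivative of a convex-graph map `G` at `(0, ȳ)`:
`z* ∈ D*G(0, ȳ)(y*)` iff `⟨z*, z⟩ − ⟨y*, y⟩ ≤ −⟨y*, ȳ⟩` for all `(z, y) ∈ G`. -/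
def coderivMem {Z Y : Type*} [NormedAddCommGroup Z] [NormedSpace ℝ Z]
    [NormedAddCommGroup Y] [NormedSpace ℝ Y]
    (G : Set (Z × Y)) (yb : Y) (ys : Y →L[ℝ] ℝ) (zs : Z →L[ℝ] ℝ) : Prop :=
  ∀ q ∈ G, zs q.1 - ys q.2 ≤ - ys yb

/-- The coderivative norm `‖D*G(0, ȳ)‖ = sup{‖z*‖ : z* ∈ D*G(0, ȳ)(y*), ‖y*‖ ≤ 1}`. -/
def coderivNorm {Z Y : Type*} [NormedAddCommGroup Z] [NormedSpace ℝ Z]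
    [NormedAddCommGroup Y] [NormedSpace ℝ Y]
    (G : Set (Z × Y)) (yb : Y) : ℝ≥0∞ :=
  ⨆ zs ∈ {zs : Z →L[ℝ] ℝ | ∃ ys : Y →L[ℝ] ℝ, ‖ys‖ ≤ 1 ∧ coderivMem G yb ys zs},
    (‖zs‖₊ : ℝ≥0∞)

/-- Weak* closure of a subset of `X* × ℝ`. -/
def wclosure2 (S : Set ((X →L[ℝ] ℝ) × ℝ)) : Set ((X →L[ℝ] ℝ) × ℝ) :=
  {q | ((StrongDual.toWeakDual q.1 : WeakDual ℝ X), q.2) ∈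
    closure ((fun w : (X →L[ℝ] ℝ) × ℝ =>
      ((StrongDual.toWeakDual w.1 : WeakDual ℝ X), w.2)) '' S)}

/-- Weak* closure of a subset of `l_∞(T)* × X* × ℝ` (the dual of `l_∞(T) × X × ℝ`). -/
def wclosure3 (S : Set ((Linf T →L[ℝ] ℝ) × ((X →L[ℝ] ℝ) × ℝ))) :
    Set ((Linf T →L[ℝ] ℝ) × ((X →L[ℝ] ℝ) × ℝ)) :=
  {q | ((StrongDual.toWeakDual q.1 : WeakDual ℝ (Linf T)),
        ((StrongDual.toWeakDual q.2.1 : WeakDual ℝ X), q.2.2)) ∈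
    closure ((fun w : (Linf T →L[ℝ] ℝ) × ((X →L[ℝ] ℝ) × ℝ) =>
      ((StrongDual.toWeakDual w.1 : WeakDual ℝ (Linf T)),
        ((StrongDual.toWeakDual w.2.1 : WeakDual ℝ X), w.2.2))) '' S)}

/-- Convex conic hull. -/
def coneHull {V : Type*} [AddCommMonoid V] [Module ℝ V] (S : Set V) : Set V :=
  {x | ∃ r : ℝ, 0 ≤ r ∧ ∃ y ∈ convexHull ℝ S, x = r • y}

/-- `C(p) = co(⋃ₜ gph (f_t − p_t)*)`. -/
def Cset (f : T → X → EReal) (p : Linf T) : Set ((X →L[ℝ] ℝ) × ℝ) :=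
  convexHull ℝ (⋃ t : T, gphConj (fun x => f t x - ((p t : ℝ) : EReal)))

/-- `H(p) = co(⋃ₜ epi (f_t − p_t)*)`. -/
def Hset (f : T → X → EReal) (p : Linf T) : Set ((X →L[ℝ] ℝ) × ℝ) :=
  convexHull ℝ (⋃ t : T, epiConj (fun x => f t x - ((p t : ℝ) : EReal)))

/-- Strong Slater condition for `σ(p)`. -/
def SSC (f : T → X → EReal) (p : Linf T) : Prop :=
  ∃ xh : X, (⨆ t : T, (f t xh - ((p t : ℝ) : EReal))) < 0

/-- `x̂` is a strong Slater point for `σ(0)`. -/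
def StrongSlaterPt (f : T → X → EReal) (xh : X) : Prop :=
  (⨆ t : T, f t xh) < 0


variable {X : Type*} [NormedAddCommGroup X] [NormedSpace ℝ X] {T : Type*}

/-- The index set `T̃ = {(t, u*) : u* ∈ dom f_t*}` of the linearized system. -/
def Ttilde (f : T → X → EReal) : Type _ :=
  {s : T × (X →L[ℝ] ℝ) // s.2 ∈ domConj (f s.1)}

/-- The linearized feasible solution map `F̃(ρ)`. -/
def feasTilde (f : T → X → EReal) (ρ : Linf (Ttilde f)) : Set X :=
  {x | ∀ s : Ttilde f, ((s.1.2 x : ℝ) : EReal) - conj (f s.1.1) s.1.2 ≤ ((ρ s : ℝ) : EReal)}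

/-- The embedding `p ↦ ρ_p`, `ρ_p(t, u*) = p_t`. -/
def rhoP (f : T → X → EReal) (p : Linf T) : Linf (Ttilde f) :=
  ⟨fun s => p s.1.1, memℓp_infty
    ⟨‖p‖, by rintro r ⟨s, rfl⟩; exact lp.norm_apply_le_norm ENNReal.top_ne_zero p s.1.1⟩⟩

/-- The subdifferential of convex analysis of `g` at `x`. -/
def subdiff (g : X → EReal) (x : X) : Set (X →L[ℝ] ℝ) :=
  {u | ∀ y, ((u y - u x : ℝ) : EReal) ≤ g y - g x}

end


/-!
By Fenchel–Moreau, a proper lower semicontinuous convex `g` satisfies `g x ≤ β` if and only if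
`u x - c ≤ β` for every `(u, c) ∈ epi g*`, i.e. for every affine minorant `u - c` of `g`. Hence
`F(p)` is the solution set of the linear system `u x ≤ γ`, `(u, γ) ∈ ⋃ₜ epi (f_t - p_t)*`, and the
theorem is Farkas' lemma for this system.

Fenchel–Moreau and Farkas are proved alike: separating a point from a closed convex set (the
epigraph of `g` in `X × ℝ`, resp. the weak* closed cone in `X* × ℝ`, whose dual is `X × ℝ`)
yields a solution `(d, s)`, `s ≥ 0`, of the homogenized system; together with a solution `z₀` of
the system itself, `(z₀ + k d) / (1 + k s)` violates the inequality to be proved for large `k`.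
-/

open Set

theorem EReal.coe_sub_le_coe_iff_forall (a c : ℝ) (z : EReal) :
    (a : EReal) - z ≤ c ↔ ∀ t : ℝ, z ≤ t → a - c ≤ t := by
  induction z using EReal.rec with
  | bot =>
    simp only [EReal.coe_sub_bot, top_le_iff, EReal.coe_ne_top, bot_le, forall_const, false_iff,
      not_forall, not_le]
    exact ⟨a - c - 1, by linarith⟩
  | coe z =>
    rw [← EReal.coe_sub, EReal.coe_le_coe_iff]
    simp only [EReal.coe_le_coe_iff]
    exact ⟨fun h t ht => by linarith, fun h => by linarith [h z le_rfl]⟩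
  | top => simp

theorem nonpos_of_forall_mul_le {r a t₀ : ℝ} (h : ∀ t, t₀ ≤ t → t * r ≤ a) : r ≤ 0 := by
  by_contra! hr
  have h₁ := h (max t₀ ((a + 1) / r)) (le_max_left _ _)
  have h₂ := (div_le_iff₀ hr).1 (le_max_right t₀ ((a + 1) / r))
  linarith

/-- `(d, s)` solves the homogenized system; the witness is `(1 + k * s)⁻¹ • (z₀ + k • d)` for
large `k`. -/
theorem exists_lt_of_homogenized {E ι : Type*} [AddCommGroup E] [Module ℝ E]
    (ℓ : ι → E →ₗ[ℝ] ℝ) (b : ι → ℝ) (φ : E →ₗ[ℝ] ℝ) {β s : ℝ} (hs : 0 ≤ s) {z₀ d : E}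
    (h₀ : ∀ i, ℓ i z₀ ≤ b i) (hd : ∀ i, ℓ i d ≤ s * b i) (hφ : s * β < φ d) :
    ∃ z, (∀ i, ℓ i z ≤ b i) ∧ β < φ z := by
  obtain ⟨k, hk, hkβ⟩ : ∃ k : ℝ, 0 ≤ k ∧ β - φ z₀ < k * (φ d - s * β) := by
    refine ⟨max 0 ((β - φ z₀) / (φ d - s * β)) + 1, by positivity, ?_⟩
    rw [← div_lt_iff₀ (sub_pos.2 hφ)]
    linarith [le_max_right 0 ((β - φ z₀) / (φ d - s * β))]
  have hden : 0 < 1 + k * s := by positivity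
  refine ⟨(1 + k * s)⁻¹ • (z₀ + k • d), fun i => ?_, ?_⟩
  · rw [map_smul, map_add, map_smul, smul_eq_mul, smul_eq_mul, inv_mul_le_iff₀ hden]
    nlinarith [h₀ i, mul_le_mul_of_nonneg_left (hd i) hk]
  · rw [map_smul, map_add, map_smul, smul_eq_mul, smul_eq_mul, lt_inv_mul_iff₀ hden]
    linarith

theorem ContinuousLinearMap.map_prod_eq_comp_inl_add_mul {E : Type*} [AddCommGroup E]
    [Module ℝ E] [TopologicalSpace E] (F : E × ℝ →L[ℝ] ℝ) (y : E) (t : ℝ) :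
    F (y, t) = F.comp (inl ℝ E ℝ) y + t * F (0, 1) := by
  have h : ((y, t) : E × ℝ) = (y, 0) + t • (0, 1) := by simp
  rw [h, map_add, map_smul, smul_eq_mul]
  rfl

section coneHull

variable {V : Type*} [AddCommGroup V] [Module ℝ V] {S : Set V}

theorem subset_coneHull : S ⊆ coneHull S :=
  fun y hy => ⟨1, zero_le_one, y, subset_convexHull ℝ S hy, (one_smul ℝ y).symm⟩

theorem smul_mem_coneHull {c : ℝ} (hc : 0 ≤ c) {w : V} (hw : w ∈ coneHull S) :
    c • w ∈ coneHull S := by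
  obtain ⟨r, hr, y, hy, rfl⟩ := hw
  exact ⟨c * r, mul_nonneg hc hr, y, hy, smul_smul c r y⟩

theorem convex_coneHull : Convex ℝ (coneHull S) := by
  rintro _ ⟨r₁, hr₁, y₁, hy₁, rfl⟩ _ ⟨r₂, hr₂, y₂, hy₂, rfl⟩ a b ha hb hab
  have h₁ := mul_nonneg ha hr₁
  have h₂ := mul_nonneg hb hr₂
  rw [smul_smul, smul_smul]
  rcases (add_nonneg h₁ h₂).eq_or_lt with h | h
  · rw [show a * r₁ = 0 by linarith, show b * r₂ = 0 by linarith, zero_smul, zero_smul,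
      add_zero]
    exact ⟨0, le_rfl, y₁, hy₁, (zero_smul ℝ y₁).symm⟩
  · refine ⟨a * r₁ + b * r₂, h.le, (a * r₁ / (a * r₁ + b * r₂)) • y₁ +
      (b * r₂ / (a * r₁ + b * r₂)) • y₂, convex_convexHull ℝ S hy₁ hy₂ (by positivity)
        (by positivity) (by field_simp), ?_⟩
    rw [smul_add, smul_smul, smul_smul, mul_div_cancel₀ _ h.ne', mul_div_cancel₀ _ h.ne']

theorem map_nonpos_of_mem_coneHull (L : V →ₗ[ℝ] ℝ) (hS : ∀ y ∈ S, L y ≤ 0) {w : V}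
    (hw : w ∈ coneHull S) : L w ≤ 0 := by
  obtain ⟨r, hr, y, hy, rfl⟩ := hw
  rw [map_smul, smul_eq_mul]
  exact mul_nonpos_of_nonneg_of_nonpos hr (convexHull_min hS (convex_halfSpace_le L.isLinear 0) hy)

end coneHull

section Conjugate

variable {X : Type*} [NormedAddCommGroup X] [NormedSpace ℝ X] {g : X → EReal}

def affineEval (y : X) : (X →L[ℝ] ℝ) × ℝ →ₗ[ℝ] ℝ where
  toFun q := q.1 y - q.2
  map_add' q q' := by simp only [Prod.fst_add, Prod.snd_add, add_apply]; ring
  map_smul' c q := by simp only [Prod.smul_fst, Prod.smul_snd, smul_apply,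
    smul_eq_mul, RingHom.id_apply]; ring

theorem mem_epiConj_iff {q : (X →L[ℝ] ℝ) × ℝ} :
    q ∈ epiConj g ↔ ∀ (y : X) (t : ℝ), g y ≤ t → q.1 y - q.2 ≤ t := by
  simp only [epiConj, conj, mem_ofPred_eq, iSup_le_iff, EReal.coe_sub_le_coe_iff_forall]

theorem mem_epiConj_of_le {q : (X →L[ℝ] ℝ) × ℝ} (hq : q ∈ epiConj g) {γ : ℝ} (hγ : q.2 ≤ γ) :
    (q.1, γ) ∈ epiConj g :=
  le_trans hq (EReal.coe_le_coe_iff.2 hγ)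

theorem mem_epiConj_sub_iff {c : ℝ} {q : (X →L[ℝ] ℝ) × ℝ} :
    q ∈ epiConj (fun y => g y - c) ↔ (q.1, q.2 - c) ∈ epiConj g := by
  have hsub : ∀ (z : EReal) (t : ℝ), z - c ≤ t ↔ z ≤ ((t + c : ℝ) : EReal) := fun z t => by
    rw [EReal.coe_add, EReal.sub_le_iff_le_add (.inl (EReal.coe_ne_bot c))
      (.inl (EReal.coe_ne_top c))]
  simp only [mem_epiConj_iff, hsub]
  refine forall_congr' fun y => ⟨fun h t ht => ?_, fun h t ht => ?_⟩
  · have := h (t - c) (by rwa [sub_add_cancel])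
    linarith
  · have := h (t + c) ht
    linarith

omit [NormedAddCommGroup X] [NormedSpace ℝ X] in
theorem LowerSemicontinuous.isClosed_realEpigraph [TopologicalSpace X]
    (hg : LowerSemicontinuous g) :
    IsClosed {q : X × ℝ | g q.1 ≤ q.2} :=
  hg.isClosed_epigraph.preimage (continuous_fst.prodMk (continuous_coe_real_ereal.comp
    continuous_snd))

theorem ErealConvexOn.convex_realEpigraph (hg : ErealConvexOn g) :
    Convex ℝ {q : X × ℝ | g q.1 ≤ q.2} := by
  rintro ⟨x, s⟩ hx ⟨y, t⟩ hy a b ha hb hab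
  calc g (a • x + b • y) ≤ (a : EReal) * g x + (b : EReal) * g y := hg x y a b ha hb hab
    _ ≤ (a : EReal) * s + (b : EReal) * t :=
      add_le_add (mul_le_mul_of_nonneg_left hx (EReal.coe_nonneg.2 ha))
        (mul_le_mul_of_nonneg_left hy (EReal.coe_nonneg.2 hb))
    _ = ((a * s + b * t : ℝ) : EReal) := by norm_cast

/-- `s ≥ 0` because the epigraph of `g` is nonempty and unbounded above. -/
theorem exists_affine_separation (hlsc : LowerSemicontinuous g) (hconv : ErealConvexOn g)
    (hfin : ∃ y, g y ≠ ⊤) {x : X} {β : ℝ} (hx : ¬ g x ≤ β) :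
    ∃ (ψ : X →L[ℝ] ℝ) (c s : ℝ), 0 ≤ s ∧ (∀ (y : X) (t : ℝ), g y ≤ t → ψ y - c ≤ s * t) ∧
      s * β < ψ x - c := by
  obtain ⟨F, c, hF, hFx⟩ := geometric_hahn_banach_closed_point (x := (x, β))
    hconv.convex_realEpigraph hlsc.isClosed_realEpigraph hx
  rw [F.map_prod_eq_comp_inl_add_mul] at hFx
  replace hF : ∀ (y : X) (t : ℝ), g y ≤ t → F.comp (.inl ℝ X ℝ) y + t * F (0, 1) < c :=
    fun y t hyt => F.map_prod_eq_comp_inl_add_mul y t ▸ hF (y, t) hyt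
  refine ⟨F.comp (.inl ℝ X ℝ), c, -F (0, 1), ?_, fun y t hyt => ?_, by linarith⟩
  · obtain ⟨y₀, hy₀⟩ := hfin
    refine neg_nonneg.2 (nonpos_of_forall_mul_le (t₀ := (g y₀).toReal)
      (a := c - F.comp (.inl ℝ X ℝ) y₀) fun t ht => ?_)
    have := hF y₀ t ((EReal.le_coe_toReal hy₀).trans (EReal.coe_le_coe_iff.2 ht))
    exact (le_sub_iff_add_le'.2 this.le)
  · linarith [hF y t hyt]

theorem epiConj_nonempty (hp : ErealProper g) (hlsc : LowerSemicontinuous g)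
    (hconv : ErealConvexOn g) : (epiConj g).Nonempty := by
  obtain ⟨x₀, hx₀⟩ := hp.2
  set c₀ := (g x₀).toReal
  have hgx₀ : g x₀ = c₀ := (EReal.coe_toReal hx₀ (hp.1 x₀)).symm
  obtain ⟨ψ, c, s, -, hsep, hψx₀⟩ := exists_affine_separation hlsc hconv hp.2 (x := x₀)
    (β := c₀ - 1) (by rw [hgx₀, EReal.coe_le_coe_iff, not_le]; linarith)
  have hs : 0 < s := by nlinarith [hsep x₀ c₀ hgx₀.le]
  refine ⟨(s⁻¹ • ψ, s⁻¹ * c), mem_epiConj_iff.2 fun y t hyt => ?_⟩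
  rw [smul_apply, smul_eq_mul, ← mul_sub, inv_mul_le_iff₀ hs]
  exact hsep y t hyt

/-- Fenchel–Moreau. -/
theorem le_of_forall_mem_epiConj (hp : ErealProper g) (hlsc : LowerSemicontinuous g)
    (hconv : ErealConvexOn g) {x : X} {β : ℝ} (h : ∀ q ∈ epiConj g, q.1 x - q.2 ≤ β) :
    g x ≤ β := by
  by_contra hx
  obtain ⟨ψ, c, s, hs, hsep, hψx⟩ := exists_affine_separation hlsc hconv hp.2 hx
  obtain ⟨q₀, hq₀⟩ := epiConj_nonempty hp hlsc hconv
  obtain ⟨q, hq, hqx⟩ := exists_lt_of_homogenized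
    (fun e : {e : X × ℝ // g e.1 ≤ e.2} => affineEval e.1.1) (fun e => e.1.2) (affineEval x) hs
    (fun e => mem_epiConj_iff.1 hq₀ _ _ e.2) (d := (ψ, c)) (fun e => hsep _ _ e.2) hψx
  exact (h q (mem_epiConj_iff.2 fun y t hyt => hq ⟨(y, t), hyt⟩)).not_gt hqx

end Conjugate

section Farkas

variable {X : Type*} [NormedAddCommGroup X] [NormedSpace ℝ X]

instance WeakDual.instLocallyConvexSpace : LocallyConvexSpace ℝ (WeakDual ℝ X) :=
  WeakBilin.locallyConvexSpace

theorem WeakDual.exists_eq_eval (G : WeakDual ℝ X →L[ℝ] ℝ) :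
    ∃ x : X, ∀ w : WeakDual ℝ X, G w = w x := by
  obtain ⟨x, hx⟩ := LinearMap.dualEmbedding_surjective (topDualPairing ℝ X) G
  exact ⟨x, fun w => by rw [← hx]; rfl⟩

noncomputable def toWeakDualProd : (X →L[ℝ] ℝ) × ℝ →ₗ[ℝ] WeakDual ℝ X × ℝ :=
  (StrongDual.toWeakDual (𝕜 := ℝ) (E := X)).toLinearMap.prodMap LinearMap.id

theorem mem_wclosure2_iff {S : Set ((X →L[ℝ] ℝ) × ℝ)} {q : (X →L[ℝ] ℝ) × ℝ} :
    q ∈ wclosure2 S ↔ toWeakDualProd q ∈ closure (toWeakDualProd '' S) :=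
  Iff.rfl

theorem exists_separation_of_not_mem_wclosure2_coneHull {S : Set ((X →L[ℝ] ℝ) × ℝ)}
    (hS : S.Nonempty) {q : (X →L[ℝ] ℝ) × ℝ} (hq : q ∉ wclosure2 (coneHull S)) :
    ∃ (x₁ : X) (r : ℝ), (∀ w ∈ coneHull S, w.1 x₁ + w.2 * r ≤ 0) ∧ 0 < q.1 x₁ + q.2 * r := by
  set J := toWeakDualProd (X := X)
  obtain ⟨Φ, u, hΦK, hΦq⟩ := geometric_hahn_banach_closed_point
    (convex_coneHull.linear_image J).closure isClosed_closure hq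
  have hK : ∀ w ∈ coneHull S, Φ (J w) ≤ 0 := fun w hw =>
    nonpos_of_forall_mul_le (t₀ := 0) (a := u) fun c hc => by
      have := hΦK _ (subset_closure ⟨c • w, smul_mem_coneHull hc hw, rfl⟩)
      rw [map_smul, map_smul, smul_eq_mul] at this
      exact this.le
  have hu : 0 < u := by
    obtain ⟨w, hw⟩ := hS
    have := hΦK _ (subset_closure ⟨0, zero_smul ℝ w ▸ smul_mem_coneHull le_rfl
      (subset_coneHull hw), rfl⟩)
    rwa [map_zero, map_zero] at this
  obtain ⟨x₁, hx₁⟩ := WeakDual.exists_eq_eval (Φ.comp (.inl ℝ _ ℝ))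
  have hΦ : ∀ w, Φ (J w) = w.1 x₁ + w.2 * Φ (0, 1) := fun w => by
    rw [Φ.map_prod_eq_comp_inl_add_mul, hx₁]
    rfl
  exact ⟨x₁, Φ (0, 1), fun w hw => hΦ w ▸ hK w hw, hΦ q ▸ hu.trans hΦq⟩

theorem forall_le_iff_mem_wclosure2_coneHull {S : Set ((X →L[ℝ] ℝ) × ℝ)} (hS : S.Nonempty)
    (hup : ∀ q ∈ S, ∀ γ : ℝ, q.2 ≤ γ → (q.1, γ) ∈ S) (hsol : ∃ x₀ : X, ∀ q ∈ S, q.1 x₀ ≤ q.2)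
    (v : X →L[ℝ] ℝ) (α : ℝ) :
    (∀ x : X, (∀ q ∈ S, q.1 x ≤ q.2) → v x ≤ α) ↔ (v, α) ∈ wclosure2 (coneHull S) := by
  constructor
  · intro h
    by_contra hv
    obtain ⟨x₁, r, hK, hvα⟩ := exists_separation_of_not_mem_wclosure2_coneHull hS hv
    have hr : 0 ≤ -r := by
      obtain ⟨q, hq⟩ := hS
      refine neg_nonneg.2 (nonpos_of_forall_mul_le (t₀ := q.2) (a := -q.1 x₁) fun γ hγ => ?_)
      linarith [hK _ (subset_coneHull (hup q hq γ hγ))]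
    obtain ⟨x₀, hx₀⟩ := hsol
    obtain ⟨x, hx, hvx⟩ := exists_lt_of_homogenized
      (fun q : S => (q.1.1 : X →ₗ[ℝ] ℝ)) (fun q => q.1.2) (v : X →ₗ[ℝ] ℝ) hr
      (fun q => hx₀ q.1 q.2) (d := x₁) (β := α)
      (fun q => by simp only [ContinuousLinearMap.coe_coe]; linarith [hK q.1 (subset_coneHull q.2)])
      (by simp only [ContinuousLinearMap.coe_coe]; linarith)
    exact (h x fun q hq => hx ⟨q, hq⟩).not_gt hvx
  · intro hv x hx
    have hclosed : IsClosed {w : WeakDual ℝ X × ℝ | w.1 x - w.2 ≤ 0} :=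
      isClosed_le (((WeakDual.eval_continuous x).comp continuous_fst).sub continuous_snd)
        continuous_const
    have hK : toWeakDualProd '' coneHull S ⊆ {w : WeakDual ℝ X × ℝ | w.1 x - w.2 ≤ 0} := by
      rintro _ ⟨w, hw, rfl⟩
      exact map_nonpos_of_mem_coneHull (affineEval x) (fun q hq => sub_nonpos.2 (hx q hq)) hw
    exact sub_nonpos.1 (closure_minimal hK hclosed (mem_wclosure2_iff.1 hv))

end Farkas

theorem feas_eq_setOf_forall_le {T X : Type*} [NormedAddCommGroup X] [NormedSpace ℝ X]
    {f : T → X → EReal} (hproper : ∀ t, ErealProper (f t))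
    (hlsc : ∀ t, LowerSemicontinuous (f t)) (hconv : ∀ t, ErealConvexOn (f t)) (p : Linf T) :
    feas f p = {x | ∀ q ∈ ⋃ t, epiConj (fun x => f t x - ((p t : ℝ) : EReal)), q.1 x ≤ q.2} := by
  ext x
  simp only [feas, mem_ofPred_eq, mem_iUnion, forall_exists_index, mem_epiConj_sub_iff]
  refine ⟨fun hx q t hq => ?_,
    fun hx t => le_of_forall_mem_epiConj (hproper t) (hlsc t) (hconv t) fun q hq => ?_⟩
  · linarith [mem_epiConj_iff.1 hq x _ (hx t)]
  · linarith [hx (q.1, q.2 + p t) t (by simpa using hq)]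

theorem stmt_10_general {T : Type*} [Nonempty T]
    {X : Type*} [NormedAddCommGroup X] [NormedSpace ℝ X]
    (f : T → X → EReal)
    (hproper : ∀ t, ErealProper (f t))
    (hlsc : ∀ t, LowerSemicontinuous (f t))
    (hconv : ∀ t, ErealConvexOn (f t))
    (p : Linf T) (hne : (feas f p).Nonempty) (v : X →L[ℝ] ℝ) (α : ℝ) :
    (∀ x ∈ feas f p, v x ≤ α) ↔
      (v, α) ∈ wclosure2 (coneHull
        (⋃ t : T, epiConj (fun x => f t x - ((p t : ℝ) : EReal)))) := by
  set S := ⋃ t : T, epiConj (fun x => f t x - ((p t : ℝ) : EReal))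
  have hfeas : feas f p = {x | ∀ q ∈ S, q.1 x ≤ q.2} :=
    feas_eq_setOf_forall_le hproper hlsc hconv p
  obtain ⟨t₀⟩ := ‹Nonempty T›
  obtain ⟨q₀, hq₀⟩ := epiConj_nonempty (hproper t₀) (hlsc t₀) (hconv t₀)
  have hS : S.Nonempty :=
    ⟨(q₀.1, q₀.2 + p t₀), mem_iUnion.2 ⟨t₀, mem_epiConj_sub_iff.2 (by simpa using hq₀)⟩⟩
  have hup : ∀ q ∈ S, ∀ γ : ℝ, q.2 ≤ γ → (q.1, γ) ∈ S := by
    simp only [S, mem_iUnion]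
    rintro q ⟨t, hq⟩ γ hγ
    exact ⟨t, mem_epiConj_of_le hq hγ⟩
  simpa only [hfeas, mem_ofPred_eq] using
    forall_le_iff_mem_wclosure2_coneHull hS hup (by rwa [hfeas] at hne) v α

theorem stmt_10 {T : Type*} [Nonempty T]
    {X : Type*} [NormedAddCommGroup X] [NormedSpace ℝ X] [CompleteSpace X]
    (f : T → X → EReal)
    (hproper : ∀ t, ErealProper (f t))
    (hlsc : ∀ t, LowerSemicontinuous (f t))
    (hconv : ∀ t, ErealConvexOn (f t))
    (p : Linf T) (hne : (feas f p).Nonempty) (v : X →L[ℝ] ℝ) (α : ℝ) :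
    (∀ x ∈ feas f p, v x ≤ α) ↔
      (v, α) ∈ wclosure2 (coneHull
        (⋃ t : T, epiConj (fun x => f t x - ((p t : ℝ) : EReal)))) :=
  stmt_10_general f hproper hlsc hconv p hne v α
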